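/- There exist a finite alphabet Σ, a single supervisor (n = 1) with observable event set Σio(1) = ∅ and some controllable event set Σic(1) = Σc ⊆ Σ, and prefix-closed languages L(E) ⊆ L(G) over Σ with ε ∈ L(E), such that: (a) there exists a feasible supervisor f : Σ* × Σ → {enable, disable} (constant on each event, since nothing is observed) whose closed-loop language equals L(E); but (b) the uncorrected inference-observability condition over all plant strings fails, i.e., there are σ ∈ Σc and s ∈ L(G) such that neither [there exist i, j ∈ Nσ with: for all s' ∈ L(G) with P_i(s') = P_i(s), (s'σ ∈ L(E) implies: for all s'' ∈ L(G) with P_j(s'') = P_j(s'), (s''σ ∈ L(G) → s''σ ∈ L(E)))] nor [sσ ∈ L(G) → sσ ∈ L(E)] holds. -/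
import Mathlib


/-- Fused (here: directly issued) decisions. -/
inductive FD
  | enable
  | disable
deriving DecidableEq

/-- Natural projection: keep only the observable letters. -/
def proj {A : Type*} (obs : A → Bool) (s : List A) : List A := s.filter obs

/-- Uncorrected knowledge of supervisor `i` (with observable events `obs`) at a
plant word `s`: `φ` holds at every plant word (of `L(G)`, not merely legal words)
that looks to the supervisor like `s`. -/
def KatG {A : Type*} (LG : Set (List A)) (obs : A → Bool)
    (φ : List A → Prop) (s : List A) : Prop :=
  ∀ s' ∈ LG, proj obs s' = proj obs s → φ s'

/-- The closed-loop language `L(f/G)`. -/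
inductive Closed {A : Type*} (LG : Set (List A)) (ctrl : A → Prop)
    (fN : List A → A → FD) : List A → Prop
  | nil : Closed LG ctrl fN []
  | uc {s : List A} {σ : A} : Closed LG ctrl fN s → s ++ [σ] ∈ LG → ¬ ctrl σ →
      Closed LG ctrl fN (s ++ [σ])
  | cc {s : List A} {σ : A} : Closed LG ctrl fN s → s ++ [σ] ∈ LG → ctrl σ →
      fN s σ = FD.enable → Closed LG ctrl fN (s ++ [σ])

/-- There is an instance with a finite alphabet, a single supervisor observing
nothing (`Σio(1) = ∅`) and controlling some `Σic(1) = Σc ⊆ Σ`, and prefix-closed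
languages `L(E) ⊆ L(G)` with `[] ∈ L(E)`, such that (a) some feasible supervisor
achieves exactly `L(E)` in closed loop, yet (b) the uncorrected
inference-observability condition, evaluated over all plant strings, fails. -/
theorem stmt_10 :
    ∃ (A : Type) (_ : Finite A) (Sic : Fin 1 → A → Bool)
      (LG LE : Set (List A)),
      -- observable event set of the single supervisor is empty:
      ∃ Sio : Fin 1 → A → Bool, (∀ i a, Sio i a = false)
      ∧ (∀ (s : List A) (σ : A), s ++ [σ] ∈ LG → s ∈ LG)
      ∧ (∀ (s : List A) (σ : A), s ++ [σ] ∈ LE → s ∈ LE)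
      ∧ LE ⊆ LG ∧ [] ∈ LE
      -- (a) a feasible supervisor whose closed-loop language equals L(E):
      ∧ (∃ f : List A → A → FD,
          (∀ (s s' : List A) (σ : A),
            proj (Sio 0) s = proj (Sio 0) s' → f s σ = f s' σ)
          ∧ {s | Closed LG (fun σ => ∃ i : Fin 1, Sic i σ) f s} = LE)
      -- (b) the uncorrected inference-observability condition fails:
      ∧ (∃ (σ : A), (∃ i : Fin 1, Sic i σ) ∧ ∃ s ∈ LG,
          ¬ (∃ i j : Fin 1, Sic i σ ∧ Sic j σ ∧
              KatG LG (Sio i)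
                (fun s' => s' ++ [σ] ∈ LE →
                  KatG LG (Sio j)
                    (fun s'' => s'' ++ [σ] ∈ LG → s'' ++ [σ] ∈ LE) s') s)
          ∧ ¬ (s ++ [σ] ∈ LG → s ++ [σ] ∈ LE)) := by
  refine ⟨Bool, inferInstance, fun _ _ => true, Set.univ,
    {s : List Bool | ∀ a ∈ s, a = true}, fun _ _ => false, fun _ _ => rfl,
    fun _ _ _ => trivial, ?_, fun _ _ => trivial, by simp, ?_, ?_⟩
  · intro s σ h a ha
    exact h a (List.mem_append_left _ ha)
  · refine ⟨fun _ σ => if σ then FD.enable else FD.disable,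
      fun _ _ _ _ => rfl, ?_⟩
    ext s
    simp only [Set.mem_setOf_eq]
    constructor
    · intro h
      induction h with
      | nil => simp
      | uc _ _ hc => exact absurd ⟨0, by simp⟩ hc
      | cc hcl hmem hctrl he ih =>
        rename_i s σ
        cases σ with
        | false => simp at he
        | true =>
          intro a ha
          rcases List.mem_append.mp ha with h' | h'
          · exact ih a h'
          · simpa using List.mem_singleton.mp h'
    · intro h
      induction s using List.reverseRecOn with
      | nil => exact Closed.nil
      | append_singleton s a ih =>
        have ha : a = true := h a (List.mem_append_right _ (by simp))
        have hs : ∀ b ∈ s, b = true := fun b hb => h b (List.mem_append_left _ hb)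
        exact Closed.cc (ih hs) trivial ⟨0, by simp⟩ (by simp [ha])
  · refine ⟨true, ⟨0, by simp⟩, [false], trivial, ?_, ?_⟩
    · rintro ⟨i, j, -, -, hK⟩
      have h1 := hK [] trivial rfl
      have h2 : ([] : List Bool) ++ [true] ∈
          {s : List Bool | ∀ a ∈ s, a = true} := by simp
      have h3 := h1 h2 [false] trivial rfl trivial
      simpa using h3 false (by simp)
    · intro h
      simpa using h trivial false (by simp)
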